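/- Let a ∈ K∖F and A = (K/F,σ,a). Then: (i) for every c ∈ K^×, G_c is an F-automorphism of A and satisfies G_c(z) = (c^{−1} ∘ z) ∘ c for all z ∈ A; (ii) for c, d ∈ K^×, G_c = G_d if and only if c^{−1}σ(c) = d^{−1}σ(d); (iii) the set N = {G_c : c ∈ K^×} is an abelian normal subgroup of Aut_F(A) isomorphic to the kernel of the norm map N_{K/F} : K^× → F^×; (iv) G_c is not the identity for every c ∈ K∖F, so in particular Aut_F(A) is nontrivial. -/

import Mathlib

open Finset

/-- The unit element `t^0` of the nonassociative cyclic algebra, in coordinates. -/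
def cycOne (K : Type*) [Zero K] [One K] (m : ℕ) : Fin m → K :=
  fun k => if (k : ℕ) = 0 then 1 else 0

/-- The embedding `x ↦ x t^0` of `K` into the nonassociative cyclic algebra. -/
def cycEmb (K : Type*) [Zero K] (m : ℕ) (x : K) : Fin m → K :=
  fun i => if (i : ℕ) = 0 then x else 0

section

variable {F K : Type*} [Field F] [Field K] [Algebra F K]

/-- Coordinates of the product in the nonassociative cyclic algebra `(K/F, σ, a)`:
`(x t^i) ∘ (y t^j) = x σ^i(y) t^{i+j}` if `i+j < m` and
`(x t^i) ∘ (y t^j) = x σ^i(y) σ^{i+j-m}(a) t^{i+j-m}` if `i+j ≥ m`. -/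
def cycMul (m : ℕ) (σ : K ≃ₐ[F] K) (a : K) (u v : Fin m → K) : Fin m → K :=
  fun k =>
    (∑ i : Fin m, ∑ j : Fin m,
        if (i : ℕ) + (j : ℕ) = (k : ℕ) then u i * (σ ^ (i : ℕ)) (v j) else 0) +
      ∑ i : Fin m, ∑ j : Fin m,
        if (i : ℕ) + (j : ℕ) = (k : ℕ) + m then
          u i * (σ ^ (i : ℕ)) (v j) * (σ ^ (k : ℕ)) a
        else 0

/-- The field norm `N_{K/F}(k) = ∏_{l=0}^{m-1} σ^l(k)`. -/
def cycNorm (m : ℕ) (σ : K ≃ₐ[F] K) (k : K) : K :=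
  ∏ l ∈ Finset.range m, (σ ^ l) k

/-- The map `H_{τ,k} : x t^i ↦ τ(x) (∏_{l=0}^{i-1} σ^l(k)) t^i`. -/
def cycH (m : ℕ) (σ τ : K ≃ₐ[F] K) (k : K) (u : Fin m → K) : Fin m → K :=
  fun i => τ (u i) * ∏ l ∈ Finset.range (i : ℕ), (σ ^ l) k

/-- The map `G_c : x t^i ↦ x c⁻¹ σ^i(c) t^i`. -/
def cycG (m : ℕ) (σ : K ≃ₐ[F] K) (c : K) (u : Fin m → K) : Fin m → K :=
  fun i => u i * c⁻¹ * (σ ^ (i : ℕ)) c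

/-- `H` is an `F`-automorphism of the nonassociative cyclic algebra `(K/F, σ, a)`. -/
def IsCycAut (m : ℕ) (σ : K ≃ₐ[F] K) (a : K) (H : (Fin m → K) → (Fin m → K)) : Prop :=
  Function.Bijective H ∧
    (∀ u v, H (u + v) = H u + H v) ∧
    (∀ (c : F) (u : Fin m → K), H (c • u) = c • H u) ∧
    H (cycOne K m) = cycOne K m ∧
    ∀ u v, H (cycMul m σ a u v) = cycMul m σ a (H u) (H v)

/-- `H` is an inner `F`-automorphism of `(K/F, σ, a)`:
`H(z) = (w_l ∘ z) ∘ w` for some `w ≠ 0` with left inverse `w_l`. -/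
def IsCycInner (m : ℕ) (σ : K ≃ₐ[F] K) (a : K) (H : (Fin m → K) → (Fin m → K)) : Prop :=
  ∃ w wl : Fin m → K, w ≠ 0 ∧ cycMul m σ a wl w = cycOne K m ∧
    ∀ z, H z = cycMul m σ a (cycMul m σ a wl z) w

end

/-!
Conjugation by `c ∈ K^×` acts on `K t^i` by the scalar `c⁻¹σ^i(c) = ∏_{l<i} σ^l(c⁻¹σ(c))`, so
`G_c = H_{id, c⁻¹σ(c)}`. This gives (ii), and identifies `N` with the group of elements
`c⁻¹σ(c)`, which is the kernel of the norm by Hilbert's Theorem 90 (a consequence of Dedekind's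
independence of characters).

For normality: since `σ(a) ≠ a`, comparing `(w ∘ t^{m-1}) ∘ t` with `w ∘ (t^{m-1} ∘ t) = w ∘ a`
shows that the left nucleus of `A` is `K = K t^0`. An automorphism `H` preserves the left nucleus,
so it maps `K` into itself by some multiplicative `τ`, and then `H ∘ G_c ∘ H⁻¹ = G_{τ(c)}`.
Finally `G_c = id = G_1` forces `σ(c) = c`, i.e. `c ∈ F`.
-/

section Multiplication

variable {F K : Type*} [Field F] [Field K] [Algebra F K] {m : ℕ} (σ : K ≃ₐ[F] K) (a : K)

lemma cycEmb_eq_single (hm : 0 < m) (x : K) : cycEmb K m x = Pi.single ⟨0, hm⟩ x := by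
  funext i
  simp [cycEmb, Pi.single_apply, Fin.ext_iff]

lemma cycMul_single_apply (u : Fin m → K) (x : K) (d k : Fin m) :
    cycMul m σ a u (Pi.single d x) k =
      (∑ i : Fin m, if (i : ℕ) + d = k then u i * (σ ^ (i : ℕ)) x else 0) +
        ∑ i : Fin m, if (i : ℕ) + d = k + m then u i * (σ ^ (i : ℕ)) x * (σ ^ (k : ℕ)) a
          else 0 := by
  unfold cycMul
  congr 1 <;> refine Finset.sum_congr rfl fun i _ => ?_ <;>
    rw [Fintype.sum_eq_single d fun j hj => by simp [hj]] <;> simp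

lemma cycMul_single_apply_of_add_eq (u : Fin m → K) (x : K) {r d k : Fin m}
    (h : (r : ℕ) + d = k) : cycMul m σ a u (Pi.single d x) k = u r * (σ ^ (r : ℕ)) x := by
  have hr : ∀ i : Fin m, (i : ℕ) + d = k ↔ i = r := fun i => by rw [Fin.ext_iff]; omega
  have hr' : ∀ i : Fin m, ¬ (i : ℕ) + d = k + m := fun i => by omega
  simp [cycMul_single_apply, hr, hr']

lemma cycMul_single_apply_of_add_eq_add (u : Fin m → K) (x : K) {r d k : Fin m}
    (h : (r : ℕ) + d = k + m) :
    cycMul m σ a u (Pi.single d x) k = u r * (σ ^ (r : ℕ)) x * (σ ^ (k : ℕ)) a := by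
  have hr : ∀ i : Fin m, (i : ℕ) + d = k + m ↔ i = r := fun i => by rw [Fin.ext_iff]; omega
  have hr' : ∀ i : Fin m, ¬ (i : ℕ) + d = k := fun i => by omega
  simp [cycMul_single_apply, hr, hr']

lemma cycMul_smul_left (x : K) (u v : Fin m → K) :
    cycMul m σ a (x • u) v = x • cycMul m σ a u v := by
  funext k
  simp only [cycMul, Pi.smul_apply, smul_eq_mul, mul_add, Finset.mul_sum, mul_ite, mul_zero,
    mul_assoc]

lemma cycMul_cycEmb_left (hm : 0 < m) (x : K) (v : Fin m → K) :
    cycMul m σ a (cycEmb K m x) v = x • v := by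
  funext k
  have hk : ∀ j : Fin m, ¬ (j : ℕ) = k + m := fun j => by omega
  rw [cycMul, cycEmb_eq_single hm, ← add_zero ((x • v) k)]
  congr 1 <;> refine (Fintype.sum_eq_single ⟨0, hm⟩ fun i hi => by simp [hi]).trans ?_ <;>
    simp [Fin.val_inj, hk]

lemma smul_cycEmb (x y : K) : x • cycEmb K m y = cycEmb K m (x * y) := by
  funext i
  simp [cycEmb]

lemma cycEmb_mul_assoc (hm : 0 < m) (x : K) (u v : Fin m → K) :
    cycMul m σ a (cycMul m σ a (cycEmb K m x) u) v =
      cycMul m σ a (cycEmb K m x) (cycMul m σ a u v) := by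
  simp only [cycMul_cycEmb_left σ a hm, cycMul_smul_left]

lemma single_mul_single_eq_cycEmb {d e : Fin m} (hde : (d : ℕ) + e = m) :
    cycMul m σ a (Pi.single e 1) (Pi.single d 1) = cycEmb K m a := by
  funext j
  by_cases hj : (j : ℕ) = 0
  · rw [cycMul_single_apply_of_add_eq_add σ a _ _ (r := e) (by omega)]
    simp [cycEmb, hj]
  · have hne : ∀ r : Fin m, (r : ℕ) ≠ e → (Pi.single e 1 : Fin m → K) r = 0 := fun r hr => by
      simp [← Fin.val_inj, hr]
    rcases le_or_gt (d : ℕ) j with hdj | hdj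
    · rw [cycMul_single_apply_of_add_eq σ a _ _ (r := ⟨j - d, by omega⟩) (by simp only; omega),
        hne _ (by simp only; omega)]
      simp [cycEmb, hj]
    · rw [cycMul_single_apply_of_add_eq_add σ a _ _ (r := ⟨j + m - d, by omega⟩)
        (by simp only; omega), hne _ (by simp only; omega)]
      simp [cycEmb, hj]

lemma apply_eq_zero_of_forall_mul_assoc (ha : σ a ≠ a) (w : Fin m → K)
    (hw : ∀ u v, cycMul m σ a (cycMul m σ a w u) v = cycMul m σ a w (cycMul m σ a u v))
    {k : Fin m} (hk : (k : ℕ) ≠ 0) : w k = 0 := by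
  by_contra hwk
  have hm : 0 < m := k.pos
  -- compare the `k`-th coordinates of `(w ∘ t^{m-1}) ∘ t` and `w ∘ (t^{m-1} ∘ t) = w ∘ a`
  have h := congrFun (hw (Pi.single ⟨m - 1, by omega⟩ 1) (Pi.single ⟨1, by omega⟩ 1)) k
  rw [single_mul_single_eq_cycEmb σ a (by simp only; omega), cycEmb_eq_single hm,
    cycMul_single_apply_of_add_eq σ a _ _ (r := ⟨k - 1, by omega⟩) (by simp only; omega),
    cycMul_single_apply_of_add_eq_add σ a _ _ (r := k) (by simp only; omega),
    cycMul_single_apply_of_add_eq σ a _ _ (r := k) (by simp)] at h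
  have hσk : (σ ^ ((k : ℕ) - 1)) a = (σ ^ (k : ℕ)) a := by simpa [hwk] using h
  apply ha
  apply (σ ^ ((k : ℕ) - 1)).injective
  rw [← AlgEquiv.mul_apply, ← pow_succ, Nat.sub_add_cancel (by omega), hσk]

lemma cycG_eq_conj (hm : 0 < m) (c : K) (z : Fin m → K) :
    cycG m σ c z = cycMul m σ a (cycMul m σ a (cycEmb K m c⁻¹) z) (cycEmb K m c) := by
  funext k
  rw [cycMul_cycEmb_left σ a hm, cycEmb_eq_single hm,
    cycMul_single_apply_of_add_eq σ a _ _ (r := k) (by simp)]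
  simp only [cycG, Pi.smul_apply, smul_eq_mul]
  ring

lemma IsCycAut.apply_cycEmb {H : (Fin m → K) → (Fin m → K)} (hH : IsCycAut m σ a H) (hm : 0 < m)
    (ha : σ a ≠ a) (x : K) : H (cycEmb K m x) = cycEmb K m (H (cycEmb K m x) ⟨0, hm⟩) := by
  obtain ⟨⟨-, hsurj⟩, -, -, -, hmul⟩ := hH
  have hassoc : ∀ u v, cycMul m σ a (cycMul m σ a (H (cycEmb K m x)) u) v =
      cycMul m σ a (H (cycEmb K m x)) (cycMul m σ a u v) := by
    intro u v
    obtain ⟨u, rfl⟩ := hsurj u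
    obtain ⟨v, rfl⟩ := hsurj v
    simp only [← hmul, cycEmb_mul_assoc σ a hm]
  funext j
  by_cases hj : (j : ℕ) = 0
  · obtain rfl : j = ⟨0, hm⟩ := Fin.ext hj
    simp [cycEmb]
  · simp [cycEmb, hj, apply_eq_zero_of_forall_mul_assoc σ a ha _ hassoc hj]

end Multiplication

section Automorphisms

variable {F K : Type*} [Field F] [Field K] [Algebra F K] {m : ℕ} (σ : K ≃ₐ[F] K)

lemma cycG_comp_cycG (c d : K) : cycG m σ c ∘ cycG m σ d = cycG m σ (c * d) := by
  funext z i
  simp only [Function.comp_apply, cycG, map_mul, mul_inv]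
  ring

lemma cycG_one : cycG m σ 1 = id := by
  funext u i
  simp [cycG]

lemma cycG_cycMul (a : K) (hσm : σ ^ m = 1) {c : K} (hc : c ≠ 0) (u v : Fin m → K) :
    cycG m σ c (cycMul m σ a u v) = cycMul m σ a (cycG m σ c u) (cycG m σ c v) := by
  have hterm : ∀ i j : Fin m, cycG m σ c u i * (σ ^ (i : ℕ)) (cycG m σ c v j) =
      u i * (σ ^ (i : ℕ)) (v j) * (c⁻¹ * (σ ^ ((i : ℕ) + j)) c) := by
    intro i j
    simp only [cycG, map_mul, map_inv₀, pow_add, AlgEquiv.mul_apply]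
    have : (σ ^ (i : ℕ)) c ≠ 0 := (map_ne_zero _).mpr hc
    field_simp
  have hwrap : ∀ n : ℕ, (σ ^ (n + m)) c = (σ ^ n) c := by simp [pow_add, hσm]
  funext k
  change cycMul m σ a u v k * c⁻¹ * (σ ^ (k : ℕ)) c = _
  simp only [cycMul, add_mul, Finset.sum_mul]
  congr 1 <;> refine Finset.sum_congr rfl fun i _ => Finset.sum_congr rfl fun j _ => ?_ <;>
    split_ifs with h
  · rw [hterm, h]; ring
  · simp
  · rw [hterm, h, hwrap]; ring
  · simp

lemma isCycAut_cycG (a : K) (hσm : σ ^ m = 1) {c : K} (hc : c ≠ 0) :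
    IsCycAut m σ a (cycG m σ c) := by
  refine ⟨?_, ?_, ?_, ?_, fun u v => cycG_cycMul σ a hσm hc u v⟩
  · refine Function.bijective_iff_has_inverse.mpr ⟨cycG m σ c⁻¹, fun u => ?_, fun u => ?_⟩
    · rw [← Function.comp_apply (f := cycG m σ c⁻¹), cycG_comp_cycG, inv_mul_cancel₀ hc, cycG_one,
        id]
    · rw [← Function.comp_apply (f := cycG m σ c), cycG_comp_cycG, mul_inv_cancel₀ hc, cycG_one,
        id]
  · intro u v
    funext i
    simp only [cycG, Pi.add_apply]
    ring
  · intro r u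
    funext i
    simp only [cycG, Pi.smul_apply, smul_mul_assoc]
  · funext i
    by_cases h : (i : ℕ) = 0 <;> simp [cycG, cycOne, h, hc]

lemma IsCycAut.exists_comp_cycG_comp_eq_cycG (a : K) {H H' : (Fin m → K) → (Fin m → K)}
    (hH : IsCycAut m σ a H) (hHH' : H ∘ H' = id) (hm : 0 < m) (ha : σ a ≠ a) {c : K}
    (hc : c ≠ 0) : ∃ d : K, d ≠ 0 ∧ H ∘ cycG m σ c ∘ H' = cycG m σ d := by
  set τ : K → K := fun x => H (cycEmb K m x) ⟨0, hm⟩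
  have hτ : ∀ x, H (cycEmb K m x) = cycEmb K m (τ x) := IsCycAut.apply_cycEmb σ a hH hm ha
  obtain ⟨-, -, -, hone, hmul⟩ := hH
  have hτc : τ c * τ c⁻¹ = 1 := by
    have hcc : cycOne K m = cycMul m σ a (cycEmb K m c) (cycEmb K m c⁻¹) := by
      rw [cycMul_cycEmb_left σ a hm, smul_cycEmb, mul_inv_cancel₀ hc]
      rfl
    have h : H (cycOne K m) ⟨0, hm⟩ = 1 := by simp [hone, cycOne]
    rw [hcc, hmul, hτ, hτ, cycMul_cycEmb_left σ a hm, smul_cycEmb] at h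
    simpa [cycEmb] using h
  refine ⟨τ c, left_ne_zero_of_mul_eq_one hτc, funext fun z => ?_⟩
  have hz : H (H' z) = z := congrFun hHH' z
  rw [Function.comp_apply, Function.comp_apply, cycG_eq_conj σ a hm, hmul, hmul, hτ, hτ, hz,
    ← inv_eq_of_mul_eq_one_right hτc, cycG_eq_conj σ a hm]

end Automorphisms

section NormOne

variable {F K : Type*} [Field F] [Field K] [Algebra F K] {m : ℕ} (σ : K ≃ₐ[F] K)

lemma prod_range_pow_apply_inv_mul_self {c : K} (hc : c ≠ 0) (n : ℕ) :
    ∏ l ∈ range n, (σ ^ l) (c⁻¹ * σ c) = c⁻¹ * (σ ^ n) c := by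
  induction n with
  | zero => simp [hc]
  | succ n ih =>
    have hσc : (σ ^ n) c ≠ 0 := (map_ne_zero _).mpr hc
    rw [prod_range_succ, ih, map_mul, map_inv₀, ← AlgEquiv.mul_apply, ← pow_succ]
    field_simp

lemma cycH_one_inv_mul_self {c : K} (hc : c ≠ 0) : cycH m σ 1 (c⁻¹ * σ c) = cycG m σ c := by
  funext u i
  simp only [cycH, cycG, AlgEquiv.one_apply, prod_range_pow_apply_inv_mul_self σ hc, mul_assoc]

lemma cycNorm_inv_mul_self (hσm : σ ^ m = 1) {c : K} (hc : c ≠ 0) :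
    cycNorm m σ (c⁻¹ * σ c) = 1 := by
  rw [cycNorm, prod_range_pow_apply_inv_mul_self σ hc, hσm, AlgEquiv.one_apply, inv_mul_cancel₀ hc]

lemma mul_apply_cycNorm (k : K) (n : ℕ) : k * σ (cycNorm n σ k) = cycNorm (n + 1) σ k := by
  simp only [cycNorm, map_prod, prod_range_succ', pow_zero, AlgEquiv.one_apply, pow_succ',
    AlgEquiv.mul_apply, mul_comm k]

lemma cycH_one_mul (k k' : K) : cycH m σ 1 (k * k') = cycH m σ 1 k ∘ cycH m σ 1 k' := by
  funext u i
  simp only [cycH, Function.comp_apply, AlgEquiv.one_apply, map_mul, prod_mul_distrib]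
  ring

lemma cycH_one_injective (hm : 1 < m) : Function.Injective (cycH m σ 1) := by
  intro k k' h
  simpa [cycH] using congrFun (congrFun h 1) ⟨1, hm⟩

lemma cycG_eq_cycG_iff (hm : 1 < m) {c d : K} (hc : c ≠ 0) (hd : d ≠ 0) :
    cycG m σ c = cycG m σ d ↔ c⁻¹ * σ c = d⁻¹ * σ d := by
  rw [← cycH_one_inv_mul_self σ hc, ← cycH_one_inv_mul_self σ hd]
  exact (cycH_one_injective σ hm).eq_iff

end NormOne

section HilbertNinety

variable {F K : Type*} [Field F] [Field K] [Algebra F K] [FiniteDimensional F K]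
  (σ : K ≃ₐ[F] K)

lemma exists_sum_mul_pow_apply_ne_zero {f : ℕ → K} (hf : f 0 ≠ 0) :
    ∃ z : K, ∑ i ∈ range (orderOf σ), f i * (σ ^ i) z ≠ 0 := by
  have hinj : Function.Injective fun i : Fin (orderOf σ) => ((σ ^ (i : ℕ) : K ≃ₐ[F] K) : K →* K) :=
    fun i j h => Fin.ext <|
      pow_injOn_Iio_orderOf i.isLt j.isLt (AlgEquiv.ext fun x => DFunLike.congr_fun h x)
  by_contra! h
  refine hf (Fintype.linearIndependent_iff.mp ((linearIndependent_monoidHom K K).comp _ hinj)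
    (fun i => f i) (funext fun z => ?_) ⟨0, orderOf_pos σ⟩)
  have hz := h z
  rw [← Fin.sum_univ_eq_sum_range] at hz
  simpa using hz

-- Mathlib's `groupCohomology.exists_div_of_norm_eq_one` is only stated for fields in `Type`.
lemma exists_eq_inv_mul_of_cycNorm_eq_one {k : K} (hk : cycNorm (orderOf σ) σ k = 1) :
    ∃ c : K, c ≠ 0 ∧ k = c⁻¹ * σ c := by
  obtain ⟨z, hb⟩ := exists_sum_mul_pow_apply_ne_zero σ (f := fun i => cycNorm i σ k)
    (by simp [cycNorm])
  set b := ∑ i ∈ range (orderOf σ), cycNorm i σ k * (σ ^ i) z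
  -- the sum telescopes because `N(k) = 1` and `σ ^ orderOf σ = 1`
  have hkb : k * σ b = b := by
    calc k * σ b = ∑ i ∈ range (orderOf σ), cycNorm (i + 1) σ k * (σ ^ (i + 1)) z := by
          simp only [b, map_sum, mul_sum, map_mul, ← mul_assoc, mul_apply_cycNorm, pow_succ',
            AlgEquiv.mul_apply]
      _ = b := by
          rw [← add_left_inj (cycNorm 0 σ k * (σ ^ 0) z), ← sum_range_succ' (f := fun i =>
            cycNorm i σ k * (σ ^ i) z), sum_range_succ, hk, pow_orderOf_eq_one]
          congr 1
  refine ⟨b⁻¹, inv_ne_zero hb, ?_⟩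
  have hσb : σ b ≠ 0 := (map_ne_zero σ).mpr hb
  rw [inv_inv, map_inv₀, eq_mul_inv_iff_mul_eq₀ hσb, hkb]

end HilbertNinety

section Galois

variable {F K : Type*} [Field F] [Field K] [Algebra F K] [IsGalois F K] [FiniteDimensional F K]
  {m : ℕ} {σ : K ≃ₐ[F] K}

lemma mem_range_algebraMap_of_apply_eq_self (hgen : ∀ τ : K ≃ₐ[F] K, τ ∈ Subgroup.zpowers σ)
    {c : K} (hc : σ c = c) : c ∈ Set.range (algebraMap F K) := by
  refine (IsGalois.mem_range_algebraMap_iff_fixed c).mpr fun τ => ?_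
  obtain ⟨n, rfl⟩ := Subgroup.mem_zpowers_iff.mp (hgen τ)
  exact (MulAction.stabilizer (K ≃ₐ[F] K) c).zpow_mem hc n

lemma cycG_ne_id (hgen : ∀ τ : K ≃ₐ[F] K, τ ∈ Subgroup.zpowers σ) (hm : 1 < m) {c : K}
    (hc : c ∉ Set.range (algebraMap F K)) : cycG m σ c ≠ id := by
  have hc0 : c ≠ 0 := fun h => hc ⟨0, by rw [h, map_zero]⟩
  rw [← cycG_one σ, Ne, cycG_eq_cycG_iff σ hm hc0 one_ne_zero, inv_one, map_one, one_mul,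
    inv_mul_eq_one₀ hc0]
  exact fun h => hc (mem_range_algebraMap_of_apply_eq_self hgen h.symm)

end Galois

/-- For `a ∈ K∖F` and `A = (K/F,σ,a)`:
(i) every `G_c` (`c ∈ K^×`) is an `F`-automorphism of `A` and `G_c(z) = (c⁻¹ ∘ z) ∘ c`;
(ii) `G_c = G_d ↔ c⁻¹σ(c) = d⁻¹σ(d)`;
(iii) `N = {G_c : c ∈ K^×}` is an abelian normal subgroup of `Aut_F(A)` isomorphic to
`ker(N_{K/F})` (the isomorphism being `k ↦ H_{id,k}`);
(iv) `G_c ≠ id` for `c ∈ K∖F`, so `Aut_F(A)` is nontrivial. -/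
theorem stmt1 {F K : Type*} [Field F] [Field K] [Algebra F K]
    (m : ℕ) (hm : 2 ≤ m) [IsGalois F K] [FiniteDimensional F K]
    (hrank : Module.finrank F K = m)
    (σ : K ≃ₐ[F] K) (hgen : ∀ τ : K ≃ₐ[F] K, τ ∈ Subgroup.zpowers σ)
    (a : K) (ha : a ∉ Set.range (algebraMap F K)) :
    -- (i)
    (∀ c : K, c ≠ 0 →
      IsCycAut m σ a (cycG m σ c) ∧
        ∀ z : Fin m → K,
          cycG m σ c z = cycMul m σ a (cycMul m σ a (cycEmb K m c⁻¹) z) (cycEmb K m c)) ∧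
    -- (ii)
    (∀ c d : K, c ≠ 0 → d ≠ 0 → (cycG m σ c = cycG m σ d ↔ c⁻¹ * σ c = d⁻¹ * σ d)) ∧
    -- (iii): N is closed under composition and abelian ...
    (∀ c d : K, c ≠ 0 → d ≠ 0 →
      cycG m σ c ∘ cycG m σ d = cycG m σ (c * d) ∧
        cycG m σ c ∘ cycG m σ d = cycG m σ d ∘ cycG m σ c) ∧
    -- ... normal in Aut_F(A) ...
    (∀ H H' : (Fin m → K) → (Fin m → K), IsCycAut m σ a H → H ∘ H' = id → H' ∘ H = id →
      ∀ c : K, c ≠ 0 → ∃ d : K, d ≠ 0 ∧ H ∘ cycG m σ c ∘ H' = cycG m σ d) ∧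
    -- ... and `k ↦ H_{id,k}` is a multiplicative bijection from `ker N_{K/F}` onto `N`
    (∀ k : K, k ≠ 0 → cycNorm m σ k = 1 → ∃ c : K, c ≠ 0 ∧ cycH m σ 1 k = cycG m σ c) ∧
    (∀ c : K, c ≠ 0 → ∃ k : K, k ≠ 0 ∧ cycNorm m σ k = 1 ∧ cycH m σ 1 k = cycG m σ c) ∧
    (∀ k k' : K, k ≠ 0 → k' ≠ 0 → cycNorm m σ k = 1 → cycNorm m σ k' = 1 →
      cycH m σ 1 k = cycH m σ 1 k' → k = k') ∧
    (∀ k k' : K, k ≠ 0 → k' ≠ 0 → cycNorm m σ k = 1 → cycNorm m σ k' = 1 →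
      cycH m σ 1 (k * k') = cycH m σ 1 k ∘ cycH m σ 1 k') ∧
    -- (iv)
    (∀ c : K, c ∉ Set.range (algebraMap F K) → cycG m σ c ≠ id) := by
  have hord : orderOf σ = m := by
    rw [orderOf_eq_card_of_forall_mem_zpowers hgen, IsGalois.card_aut_eq_finrank, hrank]
  have hσm : σ ^ m = 1 := hord ▸ pow_orderOf_eq_one σ
  have hσa : σ a ≠ a := fun h => ha (mem_range_algebraMap_of_apply_eq_self hgen h)
  refine ⟨fun c hc => ⟨isCycAut_cycG σ a hσm hc, cycG_eq_conj σ a (by omega) c⟩,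
    fun c d hc hd => cycG_eq_cycG_iff σ hm hc hd,
    fun c d _ _ => ⟨cycG_comp_cycG σ c d, by rw [cycG_comp_cycG, cycG_comp_cycG, mul_comm]⟩,
    fun H H' hH hHH' _ c hc =>
      IsCycAut.exists_comp_cycG_comp_eq_cycG σ a hH hHH' (by omega) hσa hc,
    fun k _ hk => ?_,
    fun c hc => ⟨c⁻¹ * σ c, by simpa using hc, cycNorm_inv_mul_self σ hσm hc,
      cycH_one_inv_mul_self σ hc⟩,
    fun k k' _ _ _ _ h => cycH_one_injective σ hm h,
    fun k k' _ _ _ _ => cycH_one_mul σ k k',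
    fun c hc => cycG_ne_id hgen hm hc⟩
  obtain ⟨c, hc, rfl⟩ := exists_eq_inv_mul_of_cycNorm_eq_one σ (hord ▸ hk)
  exact ⟨c, hc, cycH_one_inv_mul_self σ hc⟩
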